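/- Let E and D be O-categories with E supporting canonical fixed points, and let F : D × E → E be locally continuous. Then there is a natural isomorphism Unfold : F† ⇒ F ∘ ⟨id_D, F†⟩ with inverse Fold, whose component at an object D₀ of D is the isomorphism unfold : FIX(F_{D₀}) ≅ F(D₀, FIX(F_{D₀})) = F_{D₀}(FIX(F_{D₀})) coming from the canonical fixed point of the endofunctor F_{D₀} = F(D₀, −). In particular F†(D₀) ≅ F(D₀, F†(D₀)) naturally in D₀. -/

import Mathlib

open CategoryTheory OmegaCompletePartialOrder

universe v u

class OHom (K : Type u) [Category.{v} K] where
  homOrder : ∀ X Y : K, OmegaCompletePartialOrder (X ⟶ Y)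

attribute [instance] OHom.homOrder

/-- An O-category: a category enriched in dcpos with continuous composition. -/
class OCat (K : Type u) [Category.{v} K] extends OHom K where
  comp_mono : ∀ {X Y Z : K} {f f' : X ⟶ Y} {g g' : Y ⟶ Z},
    f ≤ f' → g ≤ g' → f ≫ g ≤ f' ≫ g'
  comp_cont_left : ∀ {X Y Z : K} (g : Y ⟶ Z) (c : Chain (X ⟶ Y))
    (hm : Monotone fun n => c n ≫ g),
    ωSup c ≫ g = ωSup ⟨fun n => c n ≫ g, hm⟩
  comp_cont_right : ∀ {X Y Z : K} (f : X ⟶ Y) (c : Chain (Y ⟶ Z))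
    (hm : Monotone fun n => f ≫ c n),
    f ≫ ωSup c = ωSup ⟨fun n => f ≫ c n, hm⟩

/-- An ω-chain of embeddings in an O-category. -/
structure ChainE (K : Type u) [Category.{v} K] [OCat K] where
  obj : ℕ → K
  e : ∀ n, obj n ⟶ obj (n + 1)
  p : ∀ n, obj (n + 1) ⟶ obj n
  ep₁ : ∀ n, e n ≫ p n = 𝟙 (obj n)
  ep₂ : ∀ n, p n ≫ e n ≤ 𝟙 (obj (n + 1))

/-- An O-colimit of an ω-chain of embeddings: a cocone of embeddings whose
leg/projection composites form an ascending chain with supremum the identity. -/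
structure OColim {K : Type u} [Category.{v} K] [OCat K] (Φ : ChainE K) where
  pt : K
  leg : ∀ n, Φ.obj n ⟶ pt
  legp : ∀ n, pt ⟶ Φ.obj n
  cocone : ∀ n, Φ.e n ≫ leg (n + 1) = leg n
  ep₁ : ∀ n, leg n ≫ legp n = 𝟙 (Φ.obj n)
  ep₂ : ∀ n, legp n ≫ leg n ≤ 𝟙 pt
  mono : Monotone fun n => legp n ≫ leg n
  sup : ωSup ⟨fun n => legp n ≫ leg n, mono⟩ = 𝟙 pt

/-- Iterated application of an endofunctor to an object: `pob F X n = Fⁿ X`. -/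
def pob {K : Type u} [Category.{v} K] (F : K ⥤ K) (X : K) : ℕ → K
  | 0 => X
  | n + 1 => F.obj (pob F X n)

/-- The links `Fⁿ k` of the ω-chain generated by a first link `k : X ⟶ F X`. -/
def plink {K : Type u} [Category.{v} K] (F : K ⥤ K) {X : K} (k : X ⟶ F.obj X) :
    ∀ n, pob F X n ⟶ pob F X (n + 1)
  | 0 => k
  | n + 1 => F.map (plink F k n)

section Curry
variable {D E : Type u} [Category.{v} D] [Category.{v} E]

/-- Partial application of a bifunctor: `cur F X = F(X, −)`. -/
def cur (F : D × E ⥤ E) (X : D) : E ⥤ E where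
  obj Y := F.obj (X, Y)
  map {Y Y'} g := F.map ((𝟙 X, g) : (X, Y) ⟶ (X, Y'))
  map_id Y := by
    show F.map (𝟙 X, 𝟙 Y) = 𝟙 (F.obj (X, Y))
    exact F.map_id (X, Y)
  map_comp {Y Y' Y''} g h := by
    show F.map ((𝟙 X, g ≫ h) : (X, Y) ⟶ (X, Y''))
        = F.map ((𝟙 X, g) : (X, Y) ⟶ (X, Y')) ≫ F.map ((𝟙 X, h) : (X, Y') ⟶ (X, Y''))
    rw [← F.map_comp]
    congr 1
    exact congrArg (fun t => ((t, g ≫ h) : (X, Y) ⟶ (X, Y''))) (Category.id_comp (𝟙 X)).symm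

/-- The chain map `Ω(Λ F f)ₙ : (F_{C₀})ⁿ ⊥ ⟶ (F_{D₀})ⁿ ⊥` induced by f : C₀ ⟶ D₀. -/
def chmap (F : D × E ⥤ E) (bot : E) {C₀ D₀ : D} (f : C₀ ⟶ D₀) :
    ∀ n, pob (cur F C₀) bot n ⟶ pob (cur F D₀) bot n
  | 0 => 𝟙 bot
  | n + 1 =>
    F.map ((f, chmap F bot f n) :
      (C₀, pob (cur F C₀) bot n) ⟶ (D₀, pob (cur F D₀) bot n))

end Curry


/-!
Because `κₙ ≫ κpₙ = 𝟙`, the composites of the fold and unfold chains collapse termwise: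
`fold ≫ unfold` becomes the chain `F(D₀, κpₙ ≫ κₙ)`, whose supremum is `F(D₀, 𝟙) = 𝟙` by local
continuity, and `unfold ≫ fold` becomes the shifted chain `κpₙ₊₁ ≫ κₙ₊₁`, whose supremum is `𝟙`.
For naturality, the chain defining `F† f` is eventually constant after precomposition with `κₙ`,
so `κₙ ≫ F† f = φₙ ≫ κₙ` for the chain map `φ`; with this, both sides of the naturality square are
suprema of the same chain `κpₙ₊₁ ≫ F(f, φₙ ≫ κₙ)`.
-/

namespace OmegaCompletePartialOrder
variable {α : Type*} [OmegaCompletePartialOrder α]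

lemma ωSup_shift (c : Chain α) :
    ωSup ⟨fun n => c (n + 1), fun _ _ h => c.monotone (Nat.succ_le_succ h)⟩ = ωSup c :=
  le_antisymm (ωSup_le_ωSup_of_le fun n => ⟨n + 1, le_rfl⟩)
    (ωSup_le_ωSup_of_le fun n => ⟨n, c.monotone n.le_succ⟩)

lemma ωSup_eq_of_forall_ge {c : Chain α} {x : α} {n : ℕ} (h : ∀ m, n ≤ m → c m = x) :
    ωSup c = x :=
  le_antisymm
    (ωSup_le _ _ fun m => (c.monotone (le_max_left m n)).trans (h _ (le_max_right m n)).le)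
    (h n le_rfl ▸ le_ωSup c n)

end OmegaCompletePartialOrder

namespace OCat
variable {K : Type u} [Category.{v} K] [OCat K]

lemma ωSup_comp_ωSup_of_eq {X Y Z : K} {c : Chain (X ⟶ Y)} {d : Chain (Y ⟶ Z)}
    {e : ℕ → (X ⟶ Z)} (h : ∀ n, c n ≫ d n = e n) :
    ωSup c ≫ ωSup d =
      ωSup ⟨e, fun a b hab => h a ▸ h b ▸ comp_mono (c.monotone hab) (d.monotone hab)⟩ := by
  apply le_antisymm
  · rw [comp_cont_left _ c fun _ _ hab => comp_mono (c.monotone hab) le_rfl]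
    refine ωSup_le _ _ fun i => ?_
    change c i ≫ ωSup d ≤ _
    rw [comp_cont_right _ d fun _ _ hab => comp_mono le_rfl (d.monotone hab)]
    exact ωSup_le _ _ fun j => le_ωSup_of_le (max i j) <|
      (comp_mono (c.monotone (le_max_left i j)) (d.monotone (le_max_right i j))).trans (h _).le
  · refine ωSup_le _ _ fun n => ?_
    calc e n = c n ≫ d n := (h n).symm
      _ ≤ ωSup c ≫ ωSup d := comp_mono (le_ωSup c n) (le_ωSup d n)

lemma ωSup_comp_ωSup_eq_ωSup_comp {W X Y Z : K} {c : Chain (W ⟶ X)} {d : Chain (X ⟶ Z)}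
    {u : Chain (W ⟶ Y)} {g : Y ⟶ Z} (h : ∀ n, c n ≫ d n = u n ≫ g) :
    ωSup c ≫ ωSup d = ωSup u ≫ g :=
  (ωSup_comp_ωSup_of_eq h).trans (comp_cont_left g u _).symm

lemma comp_ωSup_eq_of_forall_ge {X Y Z : K} {f : X ⟶ Y} {c : Chain (Y ⟶ Z)} {g : X ⟶ Z}
    {n : ℕ} (h : ∀ m, n ≤ m → f ≫ c m = g) : f ≫ ωSup c = g := by
  rw [comp_cont_right f c fun _ _ hab => comp_mono le_rfl (c.monotone hab)]
  exact ωSup_eq_of_forall_ge h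

end OCat

section OColimit
variable {K : Type u} [Category.{v} K]
  {X : ℕ → K} {l : ∀ n, X n ⟶ X (n + 1)} {A : K} {κ : ∀ n, X n ⟶ A} {κp : ∀ n, A ⟶ X n}
  {X' : ℕ → K} {l' : ∀ n, X' n ⟶ X' (n + 1)} {A' : K} {κ' : ∀ n, X' n ⟶ A'}
  {φ : ∀ n, X n ⟶ X' n}

lemma leg_comp_mediating_add (hcocone : ∀ n, l n ≫ κ (n + 1) = κ n)
    (hκ₁ : ∀ n, κ n ≫ κp n = 𝟙 (X n)) (hcocone' : ∀ n, l' n ≫ κ' (n + 1) = κ' n)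
    (hφ : ∀ n, φ n ≫ l' n = l n ≫ φ (n + 1)) (k n : ℕ) :
    κ n ≫ κp (n + k) ≫ φ (n + k) ≫ κ' (n + k) = φ n ≫ κ' n := by
  induction k generalizing n with
  | zero => rw [Nat.add_zero, ← Category.assoc, hκ₁, Category.id_comp]
  | succ k ih =>
    rw [show n + (k + 1) = n + 1 + k by omega, ← hcocone n, Category.assoc, ih (n + 1),
      ← Category.assoc, ← hφ n, Category.assoc, hcocone' n]

variable [OCat K]

lemma proj_comp_link_le (hcocone : ∀ n, l n ≫ κ (n + 1) = κ n)
    (hκ₁ : ∀ n, κ n ≫ κp n = 𝟙 (X n)) (hκ₂ : ∀ n, κp n ≫ κ n ≤ 𝟙 A) (n : ℕ) :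
    κp n ≫ l n ≤ κp (n + 1) :=
  calc κp n ≫ l n = (κp n ≫ κ n) ≫ κp (n + 1) := by
        rw [← hcocone n]; simp only [Category.assoc, hκ₁, Category.comp_id]
    _ ≤ 𝟙 A ≫ κp (n + 1) := OCat.comp_mono (hκ₂ n) le_rfl
    _ = κp (n + 1) := Category.id_comp _

lemma monotone_mediating (hcocone : ∀ n, l n ≫ κ (n + 1) = κ n)
    (hκ₁ : ∀ n, κ n ≫ κp n = 𝟙 (X n)) (hκ₂ : ∀ n, κp n ≫ κ n ≤ 𝟙 A)
    (hcocone' : ∀ n, l' n ≫ κ' (n + 1) = κ' n) (hφ : ∀ n, φ n ≫ l' n = l n ≫ φ (n + 1)) :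
    Monotone fun n => κp n ≫ φ n ≫ κ' n :=
  monotone_nat_of_le_succ fun n =>
    calc κp n ≫ φ n ≫ κ' n = (κp n ≫ l n) ≫ φ (n + 1) ≫ κ' (n + 1) := by
          rw [← hcocone' n, ← Category.assoc (φ n), hφ n]; simp only [Category.assoc]
      _ ≤ κp (n + 1) ≫ φ (n + 1) ≫ κ' (n + 1) :=
          OCat.comp_mono (proj_comp_link_le hcocone hκ₁ hκ₂ n) le_rfl

lemma leg_comp_mediating (hcocone : ∀ n, l n ≫ κ (n + 1) = κ n)
    (hκ₁ : ∀ n, κ n ≫ κp n = 𝟙 (X n)) (hcocone' : ∀ n, l' n ≫ κ' (n + 1) = κ' n)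
    (hφ : ∀ n, φ n ≫ l' n = l n ≫ φ (n + 1)) (hm : Monotone fun n => κp n ≫ φ n ≫ κ' n)
    (n : ℕ) : κ n ≫ ωSup ⟨fun n => κp n ≫ φ n ≫ κ' n, hm⟩ = φ n ≫ κ' n :=
  OCat.comp_ωSup_eq_of_forall_ge fun m hnm => by
    obtain ⟨k, rfl⟩ := Nat.exists_eq_add_of_le hnm
    exact leg_comp_mediating_add hcocone hκ₁ hcocone' hφ k n

end OColimit

section FoldUnfold
variable {K : Type u} [Category.{v} K] [OCat K] {T : K ⥤ K} {X₀ A : K}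
  {κ : ∀ n, pob T X₀ n ⟶ A} {κp : ∀ n, A ⟶ pob T X₀ n}

lemma fold_comp_unfold
    (hT : ∀ {Y Y' : K} (c : Chain (Y ⟶ Y')) (hm : Monotone fun n => T.map (c n)),
      T.map (ωSup c) = ωSup ⟨fun n => T.map (c n), hm⟩)
    (hκ₁ : ∀ n, κ n ≫ κp n = 𝟙 (pob T X₀ n)) {hmono : Monotone fun n => κp n ≫ κ n}
    (hsup : ωSup ⟨fun n => κp n ≫ κ n, hmono⟩ = 𝟙 A)
    (hf : Monotone fun n => T.map (κp n) ≫ κ (n + 1))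
    (hu : Monotone fun n => κp (n + 1) ≫ T.map (κ n)) :
    ωSup ⟨fun n => T.map (κp n) ≫ κ (n + 1), hf⟩ ≫ ωSup ⟨fun n => κp (n + 1) ≫ T.map (κ n), hu⟩
      = 𝟙 (T.obj A) := by
  have hterm : ∀ n, (T.map (κp n) ≫ κ (n + 1)) ≫ κp (n + 1) ≫ T.map (κ n) = T.map (κp n ≫ κ n) :=
    fun n => by
      erw [Category.assoc, ← Category.assoc (κ (n + 1)), hκ₁, Category.id_comp, T.map_comp]
  rw [OCat.ωSup_comp_ωSup_of_eq hterm]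
  exact (hT ⟨fun n => κp n ≫ κ n, hmono⟩ _).symm.trans (by rw [hsup, T.map_id])

lemma unfold_comp_fold (hκ₁ : ∀ n, κ n ≫ κp n = 𝟙 (pob T X₀ n))
    {hmono : Monotone fun n => κp n ≫ κ n} (hsup : ωSup ⟨fun n => κp n ≫ κ n, hmono⟩ = 𝟙 A)
    (hf : Monotone fun n => T.map (κp n) ≫ κ (n + 1))
    (hu : Monotone fun n => κp (n + 1) ≫ T.map (κ n)) :
    ωSup ⟨fun n => κp (n + 1) ≫ T.map (κ n), hu⟩ ≫ ωSup ⟨fun n => T.map (κp n) ≫ κ (n + 1), hf⟩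
      = 𝟙 A := by
  have hterm : ∀ n, (κp (n + 1) ≫ T.map (κ n)) ≫ T.map (κp n) ≫ κ (n + 1)
      = κp (n + 1) ≫ κ (n + 1) := fun n => by
    erw [Category.assoc, ← Category.assoc (T.map (κ n)), ← T.map_comp, hκ₁, T.map_id,
      Category.id_comp]
  exact (OCat.ωSup_comp_ωSup_of_eq hterm).trans ((ωSup_shift _).trans hsup)

end FoldUnfold

section Bifunctor
variable {C D E : Type*} [Category C] [Category D] [Category E] (F : C × D ⥤ E)
  {X X' : C} {Y Y' Y'' : D} (f : X ⟶ X') (g : Y ⟶ Y') (h : Y' ⟶ Y'')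

lemma bifunctor_map_id_comp_map :
    F.map ((𝟙 X, g) : (X, Y) ⟶ (X, Y')) ≫ F.map ((f, h) : (X, Y') ⟶ (X', Y''))
      = F.map ((f, g ≫ h) : (X, Y) ⟶ (X', Y'')) := by
  rw [← F.map_comp]
  exact congrArg F.map (Prod.hom_ext (Category.id_comp f) rfl)

lemma bifunctor_map_comp_map_id :
    F.map ((f, g) : (X, Y) ⟶ (X', Y')) ≫ F.map ((𝟙 X', h) : (X', Y') ⟶ (X', Y''))
      = F.map ((f, g ≫ h) : (X, Y) ⟶ (X', Y'')) := by
  rw [← F.map_comp]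
  exact congrArg F.map (Prod.hom_ext (Category.comp_id f) rfl)

end Bifunctor

section Naturality
variable {D E : Type u} [Category.{v} D] [Category.{v} E] (F : D × E ⥤ E) (X₀ : E)
  {C₀ D₀ : D} (f : C₀ ⟶ D₀)

lemma chmap_comp_plink {kC : X₀ ⟶ (cur F C₀).obj X₀} {kD : X₀ ⟶ (cur F D₀).obj X₀}
    (hk : kD = kC ≫ chmap F X₀ f 1) (n : ℕ) :
    chmap F X₀ f n ≫ plink (cur F D₀) kD n = plink (cur F C₀) kC n ≫ chmap F X₀ f (n + 1) := by
  induction n with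
  | zero => exact (Category.id_comp kD).trans hk
  | succ n ih =>
    change F.map ((f, chmap F X₀ f n) : (C₀, _) ⟶ (D₀, _))
        ≫ F.map ((𝟙 D₀, plink (cur F D₀) kD n) : (D₀, _) ⟶ (D₀, pob (cur F D₀) X₀ (n + 1)))
      = F.map ((𝟙 C₀, plink (cur F C₀) kC n) : (C₀, _) ⟶ (C₀, pob (cur F C₀) X₀ (n + 1)))
        ≫ F.map ((f, chmap F X₀ f (n + 1)) : (C₀, pob (cur F C₀) X₀ (n + 1)) ⟶ (D₀, _))
    exact (bifunctor_map_comp_map_id F f _ _).trans <| (congrArg (fun g => F.map ((f, g) :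
      (C₀, _) ⟶ (D₀, _))) ih).trans (bifunctor_map_id_comp_map F f _ _).symm

variable [OCat E]

lemma mediating_comp_unfold {AC AD : E} {κC : ∀ n, pob (cur F C₀) X₀ n ⟶ AC}
    {κpC : ∀ n, AC ⟶ pob (cur F C₀) X₀ n} {κD : ∀ n, pob (cur F D₀) X₀ n ⟶ AD}
    {κpD : ∀ n, AD ⟶ pob (cur F D₀) X₀ n} (hκ₁D : ∀ n, κD n ≫ κpD n = 𝟙 _) {m : AC ⟶ AD}
    (hm : Monotone fun n => κpC n ≫ chmap F X₀ f n ≫ κD n)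
    (hdef : m = ωSup ⟨fun n => κpC n ≫ chmap F X₀ f n ≫ κD n, hm⟩)
    (hleg : ∀ n, κC n ≫ m = chmap F X₀ f n ≫ κD n)
    (huC : Monotone fun n => κpC (n + 1) ≫ (cur F C₀).map (κC n))
    (huD : Monotone fun n => κpD (n + 1) ≫ (cur F D₀).map (κD n)) :
    m ≫ ωSup ⟨fun n => κpD (n + 1) ≫ (cur F D₀).map (κD n), huD⟩
      = ωSup ⟨fun n => κpC (n + 1) ≫ (cur F C₀).map (κC n), huC⟩
          ≫ F.map ((f, m) : (C₀, AC) ⟶ (D₀, AD)) := by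
  have hterm : ∀ n, (κpC (n + 1) ≫ chmap F X₀ f (n + 1) ≫ κD (n + 1))
      ≫ κpD (n + 1) ≫ (cur F D₀).map (κD n)
      = (κpC (n + 1) ≫ (cur F C₀).map (κC n)) ≫ F.map ((f, m) : (C₀, AC) ⟶ (D₀, AD)) :=
    fun n => calc
      _ = κpC (n + 1) ≫ F.map ((f, chmap F X₀ f n) : (C₀, _) ⟶ (D₀, _))
            ≫ F.map ((𝟙 D₀, κD n) : (D₀, _) ⟶ (D₀, AD)) := by
          erw [Category.assoc, Category.assoc, ← Category.assoc (κD (n + 1)), hκ₁D,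
            Category.id_comp]
          rfl
      _ = κpC (n + 1) ≫ F.map ((f, κC n ≫ m) : (C₀, _) ⟶ (D₀, AD)) :=
          congrArg (κpC (n + 1) ≫ ·) ((bifunctor_map_comp_map_id F f _ _).trans (by rw [hleg]))
      _ = κpC (n + 1) ≫ F.map ((𝟙 C₀, κC n) : (C₀, _) ⟶ (C₀, AC))
            ≫ F.map ((f, m) : (C₀, AC) ⟶ (D₀, AD)) :=
          congrArg (κpC (n + 1) ≫ ·) (bifunctor_map_id_comp_map F f (κC n) m).symm
      _ = _ := (Category.assoc _ _ _).symm
  exact (congrArg (· ≫ _) (hdef.trans (ωSup_shift _).symm)).trans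
    (OCat.ωSup_comp_ωSup_eq_ωSup_comp hterm)

end Naturality

theorem weak_fixed_point_identity_general
    {D : Type u} {E : Type u} [Category.{v} D] [Category.{v} E] [OCat E]
    -- E supports canonical fixed points
    (bot : E) (ι : ∀ A : E, bot ⟶ A) (hinit : ∀ (A : E) (f : bot ⟶ A), f = ι A)
    -- F locally continuous
    (F : D × E ⥤ E)
    (hFcont₂ : ∀ (X : D) {Y Y' : E} (c : Chain (Y ⟶ Y'))
      (hm : Monotone fun n => F.map ((𝟙 X, c n) : (X, Y) ⟶ (X, Y'))),
      F.map ((𝟙 X, ωSup c) : (X, Y) ⟶ (X, Y'))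
        = ωSup ⟨fun n => F.map ((𝟙 X, c n) : (X, Y) ⟶ (X, Y')), hm⟩)
    -- the chosen O-colimits defining F† on objects: F†(D₀) = FIX (F(D₀,−))
    (A : D → E)
    (κ : ∀ (D₀ : D) (n : ℕ), pob (cur F D₀) bot n ⟶ A D₀)
    (κp : ∀ (D₀ : D) (n : ℕ), A D₀ ⟶ pob (cur F D₀) bot n)
    (hcocone : ∀ (D₀ : D) (n : ℕ),
      plink (cur F D₀) (ι ((cur F D₀).obj bot)) n ≫ κ D₀ (n + 1) = κ D₀ n)
    (hκ₁ : ∀ D₀ n, κ D₀ n ≫ κp D₀ n = 𝟙 (pob (cur F D₀) bot n))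
    (hκ₂ : ∀ D₀ n, κp D₀ n ≫ κ D₀ n ≤ 𝟙 (A D₀))
    (hκmono : ∀ D₀, Monotone fun n => κp D₀ n ≫ κ D₀ n)
    (hκsup : ∀ D₀, ωSup ⟨fun n => κp D₀ n ≫ κ D₀ n, hκmono D₀⟩ = 𝟙 (A D₀))
    -- the action of F† on morphisms: the mediating morphism between the chains
    (dmap : ∀ {C₀ D₀ : D}, (C₀ ⟶ D₀) → (A C₀ ⟶ A D₀))
    (hdmap : ∀ {C₀ D₀ : D} (f : C₀ ⟶ D₀)
      (hm : Monotone fun n => κp C₀ n ≫ chmap F bot f n ≫ κ D₀ n),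
      dmap f = ωSup ⟨fun n => κp C₀ n ≫ chmap F bot f n ≫ κ D₀ n, hm⟩) :
    -- each component unfold is an isomorphism with inverse fold …
    (∀ (D₀ : D)
       (hf : Monotone fun n => (cur F D₀).map (κp D₀ n) ≫ κ D₀ (n + 1))
       (hu : Monotone fun n => κp D₀ (n + 1) ≫ (cur F D₀).map (κ D₀ n)),
      (ωSup ⟨fun n => (cur F D₀).map (κp D₀ n) ≫ κ D₀ (n + 1), hf⟩
          ≫ ωSup ⟨fun n => κp D₀ (n + 1) ≫ (cur F D₀).map (κ D₀ n), hu⟩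
        = 𝟙 (F.obj (D₀, A D₀))) ∧
      (ωSup ⟨fun n => κp D₀ (n + 1) ≫ (cur F D₀).map (κ D₀ n), hu⟩
          ≫ ωSup ⟨fun n => (cur F D₀).map (κp D₀ n) ≫ κ D₀ (n + 1), hf⟩
        = 𝟙 (A D₀))) ∧
    -- … and the family Unfold is natural: F(f, F†f) ∘ unfold_{C₀} = unfold_{D₀} ∘ F†f
    (∀ {C₀ D₀ : D} (f : C₀ ⟶ D₀)
       (huC : Monotone fun n => κp C₀ (n + 1) ≫ (cur F C₀).map (κ C₀ n))
       (huD : Monotone fun n => κp D₀ (n + 1) ≫ (cur F D₀).map (κ D₀ n)),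
      dmap f ≫ ωSup ⟨fun n => κp D₀ (n + 1) ≫ (cur F D₀).map (κ D₀ n), huD⟩
        = ωSup ⟨fun n => κp C₀ (n + 1) ≫ (cur F C₀).map (κ C₀ n), huC⟩
            ≫ F.map ((f, dmap f) : (C₀, A C₀) ⟶ (D₀, A D₀))) := by
  refine ⟨fun D₀ hf hu => ⟨fold_comp_unfold (hFcont₂ D₀) (hκ₁ D₀) (hκsup D₀) hf hu,
    unfold_comp_fold (hκ₁ D₀) (hκsup D₀) hf hu⟩, fun {C₀ D₀} f huC huD => ?_⟩
  have hφ := chmap_comp_plink F bot f (kC := ι _) (hinit _ _).symm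
  have hm := monotone_mediating (hcocone C₀) (hκ₁ C₀) (hκ₂ C₀) (hcocone D₀) hφ
  refine mediating_comp_unfold F bot f (hκ₁ D₀) hm (hdmap f hm) (fun n => ?_) huC huD
  rw [hdmap f hm]
  exact leg_comp_mediating (hcocone C₀) (hκ₁ C₀) (hcocone D₀) hφ hm n

/-- weak fixed-point identity: for F : D × E ⥤ E locally continuous
and E supporting canonical fixed points, the componentwise isomorphisms
unfold : F†(D₀) ≅ F(D₀, F†(D₀)) form a natural isomorphism
Unfold : F† ⇒ F ∘ ⟨id, F†⟩ (with inverse Fold): each component is an isomorphism,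
and the family is natural in D₀. -/
theorem weak_fixed_point_identity
    {D : Type u} {E : Type u} [Category.{v} D] [Category.{v} E] [OCat D] [OCat E]
    -- E supports canonical fixed points
    (bot : E) (ι : ∀ A : E, bot ⟶ A) (hinit : ∀ (A : E) (f : bot ⟶ A), f = ι A)
    (z : ∀ X Y : E, X ⟶ Y)
    (hz₁ : ∀ {X Y Z : E} (f : X ⟶ Y), f ≫ z Y Z = z X Z)
    (hz₂ : ∀ {X Y Z : E} (g : Y ⟶ Z), z X Y ≫ g = z X Z)
    (hstrict : ∀ {X Y : E} (f : X ⟶ Y), z X Y ≤ f)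
    (hcocomplete : ∀ Φ : ChainE E, Nonempty (OColim Φ))
    -- F locally continuous
    (F : D × E ⥤ E)
    (hFmono : ∀ {X X' : D} {Y Y' : E} {f f' : X ⟶ X'} {g g' : Y ⟶ Y'},
      f ≤ f' → g ≤ g' →
      F.map ((f, g) : (X, Y) ⟶ (X', Y')) ≤ F.map ((f', g') : (X, Y) ⟶ (X', Y')))
    (hFcont₂ : ∀ (X : D) {Y Y' : E} (c : Chain (Y ⟶ Y'))
      (hm : Monotone fun n => F.map ((𝟙 X, c n) : (X, Y) ⟶ (X, Y'))),
      F.map ((𝟙 X, ωSup c) : (X, Y) ⟶ (X, Y'))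
        = ωSup ⟨fun n => F.map ((𝟙 X, c n) : (X, Y) ⟶ (X, Y')), hm⟩)
    (hFcont₁ : ∀ {X X' : D} (Y : E) (c : Chain (X ⟶ X'))
      (hm : Monotone fun n => F.map ((c n, 𝟙 Y) : (X, Y) ⟶ (X', Y))),
      F.map ((ωSup c, 𝟙 Y) : (X, Y) ⟶ (X', Y))
        = ωSup ⟨fun n => F.map ((c n, 𝟙 Y) : (X, Y) ⟶ (X', Y)), hm⟩)
    -- the chosen O-colimits defining F† on objects: F†(D₀) = FIX (F(D₀,−))
    (A : D → E)
    (κ : ∀ (D₀ : D) (n : ℕ), pob (cur F D₀) bot n ⟶ A D₀)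
    (κp : ∀ (D₀ : D) (n : ℕ), A D₀ ⟶ pob (cur F D₀) bot n)
    (hcocone : ∀ (D₀ : D) (n : ℕ),
      plink (cur F D₀) (ι ((cur F D₀).obj bot)) n ≫ κ D₀ (n + 1) = κ D₀ n)
    (hκ₁ : ∀ D₀ n, κ D₀ n ≫ κp D₀ n = 𝟙 (pob (cur F D₀) bot n))
    (hκ₂ : ∀ D₀ n, κp D₀ n ≫ κ D₀ n ≤ 𝟙 (A D₀))
    (hκmono : ∀ D₀, Monotone fun n => κp D₀ n ≫ κ D₀ n)
    (hκsup : ∀ D₀, ωSup ⟨fun n => κp D₀ n ≫ κ D₀ n, hκmono D₀⟩ = 𝟙 (A D₀))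
    -- the action of F† on morphisms: the mediating morphism between the chains
    (dmap : ∀ {C₀ D₀ : D}, (C₀ ⟶ D₀) → (A C₀ ⟶ A D₀))
    (hdmap : ∀ {C₀ D₀ : D} (f : C₀ ⟶ D₀)
      (hm : Monotone fun n => κp C₀ n ≫ chmap F bot f n ≫ κ D₀ n),
      dmap f = ωSup ⟨fun n => κp C₀ n ≫ chmap F bot f n ≫ κ D₀ n, hm⟩) :
    -- each component unfold is an isomorphism with inverse fold …
    (∀ (D₀ : D)
       (hf : Monotone fun n => (cur F D₀).map (κp D₀ n) ≫ κ D₀ (n + 1))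
       (hu : Monotone fun n => κp D₀ (n + 1) ≫ (cur F D₀).map (κ D₀ n)),
      (ωSup ⟨fun n => (cur F D₀).map (κp D₀ n) ≫ κ D₀ (n + 1), hf⟩
          ≫ ωSup ⟨fun n => κp D₀ (n + 1) ≫ (cur F D₀).map (κ D₀ n), hu⟩
        = 𝟙 (F.obj (D₀, A D₀))) ∧
      (ωSup ⟨fun n => κp D₀ (n + 1) ≫ (cur F D₀).map (κ D₀ n), hu⟩
          ≫ ωSup ⟨fun n => (cur F D₀).map (κp D₀ n) ≫ κ D₀ (n + 1), hf⟩
        = 𝟙 (A D₀))) ∧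
    -- … and the family Unfold is natural: F(f, F†f) ∘ unfold_{C₀} = unfold_{D₀} ∘ F†f
    (∀ {C₀ D₀ : D} (f : C₀ ⟶ D₀)
       (huC : Monotone fun n => κp C₀ (n + 1) ≫ (cur F C₀).map (κ C₀ n))
       (huD : Monotone fun n => κp D₀ (n + 1) ≫ (cur F D₀).map (κ D₀ n)),
      dmap f ≫ ωSup ⟨fun n => κp D₀ (n + 1) ≫ (cur F D₀).map (κ D₀ n), huD⟩
        = ωSup ⟨fun n => κp C₀ (n + 1) ≫ (cur F C₀).map (κ C₀ n), huC⟩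
            ≫ F.map ((f, dmap f) : (C₀, A C₀) ⟶ (D₀, A D₀))) :=
  weak_fixed_point_identity_general bot ι hinit F hFcont₂ A κ κp hcocone hκ₁ hκ₂ hκmono hκsup dmap
    hdmap
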